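/- Let T > 0 and let v : [0, T] → ℝ^{n−2} be Lipschitz with |v(t)| ≤ 1/2 for all t. Set w(t) = (1 − |v(t)|²)^{1/2} and z(t) = (cos t · w(t), sin t · w(t), v(t)). Then for almost every t one has |z'(t)| ≤ 1 + |v'(t)|², and consequently the length of the curve z satisfies ∫_0^T |z'(t)| dt ≤ T + ∫_0^T |v'(t)|² dt. -/

import Mathlib

/-! With `w = √(1 - ‖v‖²)`, the curve `z = (cos t · w, sin t · w, v)` has
`‖z'‖² = w² + w'² + ‖v'‖²`. Differentiating `w² + ‖v‖² = 1` gives `w w' = -⟪v, v'⟫`, so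
`w'² ≤ ‖v‖² ‖v'‖² / w² ≤ ‖v'‖²`, because `‖v‖ ≤ 1/2` forces `‖v‖² ≤ w²`. Hence
`‖z'‖² ≤ 1 + 2‖v'‖² ≤ (1 + ‖v'‖²)²` wherever `v` is differentiable, which by Rademacher's theorem
is almost everywhere. Integrating gives the length bound; the integrals exist because `‖v'‖` is
bounded by the Lipschitz constant. -/

open MeasureTheory Set Real
open scoped RealInnerProductSpace

section InnerProductSpace

variable {E : Type*} [NormedAddCommGroup E] [InnerProductSpace ℝ E]

lemma norm_smul_add_smul_add_sq {x y u : E} (hx : ‖x‖ = 1) (hy : ‖y‖ = 1) (hxy : ⟪x, y⟫ = 0)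
    (hxu : ⟪x, u⟫ = 0) (hyu : ⟪y, u⟫ = 0) (a b : ℝ) :
    ‖a • x + b • y + u‖ ^ 2 = a ^ 2 + b ^ 2 + ‖u‖ ^ 2 := by
  rw [norm_add_sq_real, norm_add_sq_real, norm_smul, norm_smul, hx, hy]
  simp only [inner_add_left, inner_smul_left, inner_smul_right, hxy, hxu, hyu, Real.norm_eq_abs,
    RCLike.conj_to_real, mul_one, sq_abs]
  ring

lemma HasDerivAt.inner_eq_zero_of_forall {v : ℝ → E} {v' : E} {t : ℝ} (hv : HasDerivAt v v' t)
    {e : E} (h : ∀ s, ⟪e, v s⟫ = 0) : ⟪e, v'⟫ = 0 := by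
  have hderiv : HasDerivAt (fun s => ⟪e, v s⟫) ⟪e, v'⟫ t :=
    (innerSL ℝ e).hasFDerivAt.comp_hasDerivAt t hv
  simp only [h] at hderiv
  exact hderiv.unique (hasDerivAt_const t 0)

lemma hasDerivAt_sqrt_one_sub_norm_sq {v : ℝ → E} {v' : E} {t : ℝ} (hv : HasDerivAt v v' t)
    (ht : ‖v t‖ < 1) :
    HasDerivAt (fun s => √(1 - ‖v s‖ ^ 2)) (-⟪v t, v'⟫ / √(1 - ‖v t‖ ^ 2)) t := by
  have hpos : 1 - ‖v t‖ ^ 2 ≠ 0 := by nlinarith [norm_nonneg (v t)]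
  convert (hv.norm_sq.const_sub 1).sqrt hpos using 1
  field_simp

lemma sq_inner_div_sqrt_one_sub_norm_sq_le {x : E} (hx : ‖x‖ ^ 2 ≤ 1 / 2) (y : E) :
    (⟪x, y⟫ / √(1 - ‖x‖ ^ 2)) ^ 2 ≤ ‖y‖ ^ 2 := by
  have hpos : 0 < 1 - ‖x‖ ^ 2 := by linarith
  rw [div_pow, sq_sqrt hpos.le, div_le_iff₀ hpos]
  calc ⟪x, y⟫ ^ 2 ≤ (‖x‖ * ‖y‖) ^ 2 := by
        rw [← sq_abs]; exact pow_le_pow_left₀ (abs_nonneg _) (abs_real_inner_le_norm x y) 2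
    _ ≤ ‖y‖ ^ 2 * (1 - ‖x‖ ^ 2) := by nlinarith [sq_nonneg ‖y‖]

noncomputable def rotatingCurve (e₀ e₁ : E) (w : ℝ → ℝ) (v : ℝ → E) (s : ℝ) : E :=
  (cos s * w s) • e₀ + (sin s * w s) • e₁ + v s

lemma hasDerivAt_rotatingCurve (e₀ e₁ : E) {w : ℝ → ℝ} {v : ℝ → E} {w' : ℝ} {v' : E} {t : ℝ}
    (hw : HasDerivAt w w' t) (hv : HasDerivAt v v' t) :
    HasDerivAt (rotatingCurve e₀ e₁ w v)
      ((-sin t * w t + cos t * w') • e₀ + (cos t * w t + sin t * w') • e₁ + v') t := by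
  convert ((((hasDerivAt_cos t).mul hw).smul_const e₀).add
    (((hasDerivAt_sin t).mul hw).smul_const e₁)).add hv using 1
  rfl

lemma norm_deriv_rotatingCurve_sq {e₀ e₁ : E} (h₀ : ‖e₀‖ = 1) (h₁ : ‖e₁‖ = 1)
    (h₀₁ : ⟪e₀, e₁⟫ = 0) {w : ℝ → ℝ} {v : ℝ → E} (hv₀ : ∀ s, ⟪e₀, v s⟫ = 0)
    (hv₁ : ∀ s, ⟪e₁, v s⟫ = 0) {w' : ℝ} {v' : E} {t : ℝ}
    (hw : HasDerivAt w w' t) (hv : HasDerivAt v v' t) :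
    ‖deriv (rotatingCurve e₀ e₁ w v) t‖ ^ 2 = w t ^ 2 + w' ^ 2 + ‖v'‖ ^ 2 := by
  rw [(hasDerivAt_rotatingCurve e₀ e₁ hw hv).deriv, norm_smul_add_smul_add_sq h₀ h₁ h₀₁
    (hv.inner_eq_zero_of_forall hv₀) (hv.inner_eq_zero_of_forall hv₁)]
  linear_combination (w t ^ 2 + w' ^ 2) * sin_sq_add_cos_sq t

lemma norm_deriv_rotatingCurve_le {e₀ e₁ : E} (h₀ : ‖e₀‖ = 1) (h₁ : ‖e₁‖ = 1)
    (h₀₁ : ⟪e₀, e₁⟫ = 0) {v : ℝ → E} (hv₀ : ∀ s, ⟪e₀, v s⟫ = 0)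
    (hv₁ : ∀ s, ⟪e₁, v s⟫ = 0) {t : ℝ} (hv : DifferentiableAt ℝ v t) (ht : ‖v t‖ ^ 2 ≤ 1 / 2) :
    ‖deriv (rotatingCurve e₀ e₁ (fun s => √(1 - ‖v s‖ ^ 2)) v) t‖ ≤ 1 + ‖deriv v t‖ ^ 2 := by
  have hw := hasDerivAt_sqrt_one_sub_norm_sq hv.hasDerivAt (by nlinarith [norm_nonneg (v t)])
  have hw' := sq_inner_div_sqrt_one_sub_norm_sq_le ht (deriv v t)
  rw [← pow_le_pow_iff_left₀ (norm_nonneg _) (by positivity) two_ne_zero,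
    norm_deriv_rotatingCurve_sq h₀ h₁ h₀₁ hv₀ hv₁ hw hv.hasDerivAt, neg_div, neg_sq,
    sq_sqrt (by linarith)]
  nlinarith [norm_nonneg (deriv v t)]

end InnerProductSpace

lemma LipschitzOnWith.intervalIntegrable_norm_deriv_sq {E : Type*} [NormedAddCommGroup E]
    [NormedSpace ℝ E] [CompleteSpace E] {v : ℝ → E} {K : NNReal} {a b : ℝ} (hab : a ≤ b)
    (hv : LipschitzOnWith K v (Icc a b)) :
    IntervalIntegrable (fun t => ‖deriv v t‖ ^ 2) volume a b := by
  rw [intervalIntegrable_iff', uIcc_of_le hab, integrableOn_Icc_iff_integrableOn_Ioo]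
  refine Measure.integrableOn_of_bounded (M := (K : ℝ) ^ 2) measure_Ioo_lt_top.ne
    ((aestronglyMeasurable_deriv v _).norm.pow 2) ((ae_restrict_iff' measurableSet_Ioo).2 ?_)
  refine .of_forall fun t ht => ?_
  have hK := norm_deriv_le_of_lipschitzOn (Icc_mem_nhds ht.1 ht.2) hv
  rw [norm_pow, norm_norm]
  gcongr

lemma intervalIntegral.integral_norm_le_of_ae_mem_Ioo {E : Type*} [NormedAddCommGroup E]
    {f : ℝ → E} {g : ℝ → ℝ} {a b : ℝ} (hab : a ≤ b) (hf : AEStronglyMeasurable f volume)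
    (hg : IntervalIntegrable g volume a b) (hfg : ∀ᵐ t, t ∈ Ioo a b → ‖f t‖ ≤ g t) :
    ∫ t in a..b, ‖f t‖ ≤ ∫ t in a..b, g t := by
  have hfg' : (fun t => ‖f t‖) ≤ᵐ[volume.restrict (Icc a b)] g := by
    rw [Measure.restrict_congr_set Ioo_ae_eq_Icc.symm]
    exact (ae_restrict_iff' measurableSet_Ioo).2 hfg
  refine integral_mono_ae_restrict hab ?_ hg hfg'
  refine hg.mono_fun' hf.norm.restrict ?_
  simp only [norm_norm]
  exact ae_mono (Measure.restrict_mono (uIoc_of_le hab ▸ Ioc_subset_Icc_self) le_rfl) hfg'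

/-- let `v : [0,T] → ℝ^{n−2}` be Lipschitz with `|v| ≤ 1/2`, let
`w = (1 − |v|²)^{1/2}` and `z(t) = (cos t · w(t), sin t · w(t), v(t))` (in coordinates of
`EuclideanSpace ℝ (Fin n)`, with `v` supported on coordinates `i ≥ 2`). Then for almost
every `t ∈ (0,T)` one has `|z'(t)| ≤ 1 + |v'(t)|²`, and consequently
`∫_0^T |z'(t)| dt ≤ T + ∫_0^T |v'(t)|² dt`. -/
theorem stmt12 (n : ℕ) (hn : 2 ≤ n) (T : ℝ) (hT : 0 < T)
    (v : ℝ → EuclideanSpace ℝ (Fin n)) (K : NNReal)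
    (hlip : LipschitzOnWith K v (Icc 0 T))
    (hsmall : ∀ t ∈ Icc (0:ℝ) T, ‖v t‖ ≤ 1 / 2)
    (hv0 : ∀ s : ℝ, ∀ i : Fin n, (i : ℕ) < 2 → v s i = 0)
    (w : ℝ → ℝ) (hw : ∀ s, w s = Real.sqrt (1 - ‖v s‖ ^ 2))
    (z : ℝ → EuclideanSpace ℝ (Fin n))
    (hz : ∀ s : ℝ, z s = fun i : Fin n =>
      if (i : ℕ) = 0 then Real.cos s * w s
      else if (i : ℕ) = 1 then Real.sin s * w s
      else v s i) :
    (∀ᵐ t ∂volume, t ∈ Ioo 0 T → ‖deriv z t‖ ≤ 1 + ‖deriv v t‖ ^ 2) ∧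
    (∫ t in (0:ℝ)..T, ‖deriv z t‖) ≤ T + ∫ t in (0:ℝ)..T, ‖deriv v t‖ ^ 2 := by
  set e₀ := EuclideanSpace.single (⟨0, by omega⟩ : Fin n) (1 : ℝ)
  set e₁ := EuclideanSpace.single (⟨1, by omega⟩ : Fin n) (1 : ℝ)
  have hz' : z = rotatingCurve e₀ e₁ (fun s => √(1 - ‖v s‖ ^ 2)) v := by
    funext s
    ext ⟨_ | _ | i, hi⟩ <;> simp [rotatingCurve, e₀, e₁, hz s, hw s, hv0 s]
  have hv₀ (s : ℝ) : ⟪e₀, v s⟫ = 0 := by simp [e₀, EuclideanSpace.inner_single_left, hv0 s]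
  have hv₁ (s : ℝ) : ⟪e₁, v s⟫ = 0 := by simp [e₁, EuclideanSpace.inner_single_left, hv0 s]
  have hpt : ∀ᵐ t, t ∈ Ioo 0 T → ‖deriv z t‖ ≤ 1 + ‖deriv v t‖ ^ 2 := by
    filter_upwards [hlip.ae_differentiableWithinAt_of_mem] with t hdiff ht
    rw [hz']
    exact norm_deriv_rotatingCurve_le (by simp [e₀]) (by simp [e₁])
      (by simp [e₀, e₁, EuclideanSpace.inner_single_left]) hv₀ hv₁
      ((hdiff (Ioo_subset_Icc_self ht)).differentiableAt (Icc_mem_nhds ht.1 ht.2))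
      (by nlinarith [hsmall t (Ioo_subset_Icc_self ht), norm_nonneg (v t)])
  refine ⟨hpt, ?_⟩
  have hv' := hlip.intervalIntegrable_norm_deriv_sq hT.le
  calc ∫ t in (0:ℝ)..T, ‖deriv z t‖ ≤ ∫ t in (0:ℝ)..T, (1 + ‖deriv v t‖ ^ 2) :=
        intervalIntegral.integral_norm_le_of_ae_mem_Ioo hT.le
          (aestronglyMeasurable_deriv z _) (intervalIntegrable_const.add hv') hpt
    _ = T + ∫ t in (0:ℝ)..T, ‖deriv v t‖ ^ 2 := by
        rw [intervalIntegral.integral_add intervalIntegrable_const hv']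
        simp
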